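/- Let (A, ⟨·,·⟩) be a finite-dimensional metric Jordan algebra with Jordan-Levi-Civita connection ∇, and let R(X,Y)Z = ∇_{XY}Z − ∇_X∇_Y Z − ∇_Y∇_X Z. Then ⟨R(X,Y)Z, W⟩ = ⟨R(X,Y)W, Z⟩ for all X, Y, Z, W in A. -/

import Mathlib

/-!
Metric compatibility says exactly that every `∇_X` is self-adjoint. The operator
`R(X,Y) = ∇_{XY} - (∇_X ∇_Y + ∇_Y ∇_X)` is then self-adjoint too, since the anticommutator of two
self-adjoint operators is self-adjoint.
-/

open RealInnerProductSpace

theorem LinearMap.IsSymmetric.mul_add_mul {𝕜 E : Type*} [RCLike 𝕜] [SeminormedAddCommGroup E]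
    [InnerProductSpace 𝕜 E] {S T : E →ₗ[𝕜] E} (hS : S.IsSymmetric) (hT : T.IsSymmetric) :
    (S * T + T * S).IsSymmetric := fun x y => by
  simp only [LinearMap.add_apply, Module.End.mul_apply, inner_add_left, inner_add_right, hS _, hT _]
  exact add_comm _ _

theorem jordan_curvature_symm_last_two
    {V : Type*} [NormedAddCommGroup V] [InnerProductSpace ℝ V]
    (mul : V →ₗ[ℝ] V →ₗ[ℝ] V)
    (D : V →ₗ[ℝ] V →ₗ[ℝ] V)
    (hD₂ : ∀ X Y Z : V, ⟪D X Y, Z⟫ = ⟪Y, D X Z⟫)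
    (R : V → V → V → V)
    (hR : ∀ X Y Z : V, R X Y Z = D (mul X Y) Z - D X (D Y Z) - D Y (D X Z)) :
    ∀ X Y Z W : V, ⟪R X Y Z, W⟫ = ⟪R X Y W, Z⟫ := by
  intro X Y Z W
  set T : V →ₗ[ℝ] V := D (mul X Y) - (D X * D Y + D Y * D X)
  have hRT : ∀ Z, R X Y Z = T Z := fun Z => by
    simp only [T, hR, LinearMap.sub_apply, LinearMap.add_apply, Module.End.mul_apply, sub_sub]
  have hT : T.IsSymmetric := 
    LinearMap.IsSymmetric.sub (hD₂ _) (LinearMap.IsSymmetric.mul_add_mul (hD₂ X) (hD₂ Y))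
  rw [hRT, hRT, hT, real_inner_comm]
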